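/- arXiv:2109.11072 — 7 statements merged into one kernel-verified Lean document; each statement's English description precedes it below -/
import Mathlib

section
/- If U and V are nonempty closed convex subsets of a real Hilbert space X with U ⊥ V (every element of U is orthogonal to every element of V), then U + V is a nonempty closed convex subset of X and the projection satisfies P_{U+V}(x) = P_U(x) + P_V(x) for all x ∈ X. -/
open RealInnerProductSpace Pointwise

/-- If `U` and `V` are nonempty closed convex subsets of a real Hilbert space `X`
with `U ⊥ V`, then `U + V` is a nonempty closed convex subset of `X` and the metric projection
satisfies `P_{U+V}(x) = P_U(x) + P_V(x)` for all `x ∈ X`.  The metric projections `pU`, `pV`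
onto `U` and `V` are described by their nearest-point property. -/
theorem stmt0 {X : Type*} [NormedAddCommGroup X] [InnerProductSpace ℝ X] [CompleteSpace X]
    (U V : Set X) (hUne : U.Nonempty) (hVne : V.Nonempty)
    (hUc : IsClosed U) (hVc : IsClosed V) (hUconv : Convex ℝ U) (hVconv : Convex ℝ V)
    (hperp : ∀ u ∈ U, ∀ v ∈ V, ⟪u, v⟫ = 0)
    (pU pV : X → X)
    (hpU : ∀ x, pU x ∈ U ∧ ∀ u ∈ U, ‖x - pU x‖ ≤ ‖x - u‖)
    (hpV : ∀ x, pV x ∈ V ∧ ∀ v ∈ V, ‖x - pV x‖ ≤ ‖x - v‖) :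
    (U + V).Nonempty ∧ IsClosed (U + V) ∧ Convex ℝ (U + V) ∧
      ∀ x, pU x + pV x ∈ U + V ∧ ∀ w ∈ U + V, ‖x - (pU x + pV x)‖ ≤ ‖x - w‖ := by
  have hperp2 : ∀ u ∈ U, ∀ u' ∈ U, ∀ v ∈ V, ∀ v' ∈ V, ⟪u - u', v - v'⟫ = 0 := by
    intro u hu u' hu' v hv v' hv'
    simp [inner_sub_left, inner_sub_right, hperp u hu v hv, hperp u hu v' hv',
      hperp u' hu' v hv, hperp u' hu' v' hv']
  have charU : ∀ x, ∀ u ∈ U, ⟪x - pU x, u - pU x⟫ ≤ 0 := by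
    intro x
    haveI : Nonempty ↑U := hUne.to_subtype
    have h1 : ‖x - pU x‖ = ⨅ w : U, ‖x - w‖ := by
      obtain ⟨hmem, hmin⟩ := hpU x
      apply le_antisymm
      · exact le_ciInf fun w => hmin w w.2
      · exact ciInf_le ⟨0, fun y hy => by obtain ⟨w, rfl⟩ := hy; positivity⟩
          (⟨pU x, hmem⟩ : U)
    exact (norm_eq_iInf_iff_real_inner_le_zero hUconv (hpU x).1).mp h1
  have charV : ∀ x, ∀ v ∈ V, ⟪x - pV x, v - pV x⟫ ≤ 0 := by
    intro x
    haveI : Nonempty ↑V := hVne.to_subtype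
    have h1 : ‖x - pV x‖ = ⨅ w : V, ‖x - w‖ := by
      obtain ⟨hmem, hmin⟩ := hpV x
      apply le_antisymm
      · exact le_ciInf fun w => hmin w w.2
      · exact ciInf_le ⟨0, fun y hy => by obtain ⟨w, rfl⟩ := hy; positivity⟩
          (⟨pV x, hmem⟩ : V)
    exact (norm_eq_iInf_iff_real_inner_le_zero hVconv (hpV x).1).mp h1
  refine ⟨hUne.add hVne, ?_, hUconv.add hVconv, ?_⟩
  · -- closedness
    rw [← isSeqClosed_iff_isClosed]
    intro f z hf hz
    choose u hu v hv hsum using fun n => Set.mem_add.mp (hf n)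
    have hcf : CauchySeq f := hz.cauchySeq
    have key : ∀ n m : ℕ, dist (u n) (u m) ≤ dist (f n) (f m) ∧
        dist (v n) (v m) ≤ dist (f n) (f m) := by
      intro n m
      have ho : ⟪u n - u m, v n - v m⟫ = 0 :=
        hperp2 _ (hu n) _ (hu m) _ (hv n) _ (hv m)
      have hsq : dist (f n) (f m) ^ 2 = dist (u n) (u m) ^ 2 + dist (v n) (v m) ^ 2 := by
        rw [dist_eq_norm, dist_eq_norm, dist_eq_norm]
        have e : f n - f m = (u n - u m) + (v n - v m) := by
          rw [← hsum n, ← hsum m]; abel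
        rw [e, norm_add_sq_real, ho]; ring
      constructor <;>
        nlinarith [dist_nonneg (x := u n) (y := u m), dist_nonneg (x := v n) (y := v m),
          dist_nonneg (x := f n) (y := f m), sq_nonneg (dist (u n) (u m)),
          sq_nonneg (dist (v n) (v m))]
    have hcu : CauchySeq u := by
      rw [Metric.cauchySeq_iff] at hcf ⊢
      intro ε hε
      obtain ⟨N, hN⟩ := hcf ε hε
      exact ⟨N, fun m hm n hn => lt_of_le_of_lt (key m n).1 (hN m hm n hn)⟩
    have hcv : CauchySeq v := by
      rw [Metric.cauchySeq_iff] at hcf ⊢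
      intro ε hε
      obtain ⟨N, hN⟩ := hcf ε hε
      exact ⟨N, fun m hm n hn => lt_of_le_of_lt (key m n).2 (hN m hm n hn)⟩
    obtain ⟨a, ha⟩ := cauchySeq_tendsto_of_complete hcu
    obtain ⟨b, hb⟩ := cauchySeq_tendsto_of_complete hcv
    have haU : a ∈ U := hUc.mem_of_tendsto ha (Filter.Eventually.of_forall hu)
    have hbV : b ∈ V := hVc.mem_of_tendsto hb (Filter.Eventually.of_forall hv)
    have hfab : Filter.Tendsto f Filter.atTop (nhds (a + b)) := by
      have := ha.add hb
      refine this.congr fun n => hsum n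
    have : z = a + b := tendsto_nhds_unique hz hfab
    exact this ▸ Set.add_mem_add haU hbV
  · intro x
    have hmem : pU x + pV x ∈ U + V := Set.add_mem_add (hpU x).1 (hpV x).1
    refine ⟨hmem, ?_⟩
    intro w hw
    obtain ⟨u, hu, v, hv, rfl⟩ := hw
    set p := pU x + pV x with hp
    have key : ⟪x - p, (u + v) - p⟫ ≤ 0 := by
      have e1 : (u + v) - p = (u - pU x) + (v - pV x) := by rw [hp]; abel
      rw [e1, inner_add_right]
      have hU1 : ⟪x - p, u - pU x⟫ = ⟪x - pU x, u - pU x⟫ := by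
        have e2 : x - p = (x - pU x) - pV x := by rw [hp]; abel
        rw [e2, inner_sub_left]
        have : ⟪pV x, u - pU x⟫ = 0 := by
          have h1 : ⟪pV x, u⟫ = 0 := by
            rw [real_inner_comm]; exact hperp u hu _ (hpV x).1
          have h2 : ⟪pV x, pU x⟫ = 0 := by
            rw [real_inner_comm]; exact hperp _ (hpU x).1 _ (hpV x).1
          rw [inner_sub_right, h1, h2]; ring
        rw [this]; ring
      have hV1 : ⟪x - p, v - pV x⟫ = ⟪x - pV x, v - pV x⟫ := by
        have e2 : x - p = (x - pV x) - pU x := by rw [hp]; abel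
        rw [e2, inner_sub_left]
        have : ⟪pU x, v - pV x⟫ = 0 := by
          rw [inner_sub_right, hperp _ (hpU x).1 v hv, hperp _ (hpU x).1 _ (hpV x).1]
          ring
        rw [this]; ring
      rw [hU1, hV1]
      exact add_nonpos (charU x u hu) (charV x v hv)
    have hsq : ‖x - p‖ ^ 2 ≤ ‖x - (u + v)‖ ^ 2 := by
      have e : x - (u + v) = (x - p) + (p - (u + v)) := by abel
      rw [e, norm_add_sq_real]
      have hi : ⟪x - p, p - (u + v)⟫ = -⟪x - p, (u + v) - p⟫ := by
        rw [← inner_neg_right]; congr 1; abel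
      nlinarith [sq_nonneg ‖p - (u + v)‖]
    nlinarith [norm_nonneg (x - p), norm_nonneg (x - (u + v))]
end

section
/- Let U, V be linear subspaces of a finite-dimensional real Hilbert space X. Then the orthogonal projection onto U ∩ V equals 2·P_U·(P_U + P_V)^†·P_V, where † denotes the Moore–Penrose pseudoinverse (Anderson–Duffin formula). -/
/-- `B` is the Moore–Penrose (pseudo)inverse of `A`, characterized by the four Penrose
conditions. -/
def IsMoorePenroseInverse {X Y : Type*} [NormedAddCommGroup X] [InnerProductSpace ℝ X]
    [CompleteSpace X] [NormedAddCommGroup Y] [InnerProductSpace ℝ Y] [CompleteSpace Y]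
    (A : X →L[ℝ] Y) (B : Y →L[ℝ] X) : Prop :=
  A ∘L B ∘L A = A ∧ B ∘L A ∘L B = B ∧ IsSelfAdjoint (A ∘L B) ∧ IsSelfAdjoint (B ∘L A)

/-- The orthogonal projection onto a subspace, as an operator `X → X`. -/
noncomputable def proj {X : Type*} [NormedAddCommGroup X] [InnerProductSpace ℝ X]
    (U : Submodule ℝ X) [U.HasOrthogonalProjection] : X →L[ℝ] X :=
  U.subtypeL ∘L U.orthogonalProjectionOnto


/-!
Write `T = P_U + P_V`. Since `⟪T x, x⟫ = ‖P_U x‖² + ‖P_V x‖²`, the kernel of `T` is `(U ⊔ V)ᗮ`,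
so the self-adjoint idempotents `T B` and `B T` both fix `U ⊔ V`. Expanding `T B P_V = P_V` and
`P_V B T = P_V` gives `P_U B P_V = P_V B P_U`, hence `M = 2 P_U B P_V` takes values in `U ⊓ V`.
With `W = U ⊓ V`, from `P_W T = 2 P_W` and `P_W T B = P_W` we get `2 P_W B = P_W`, and then
`P_W = P_W P_V = 2 P_W P_U B P_V = P_W M = M`.
-/

open scoped RealInnerProductSpace

section MoorePenrose

open ContinuousLinearMap

variable {X Y : Type*} [NormedAddCommGroup X] [InnerProductSpace ℝ X] [CompleteSpace X]
  [NormedAddCommGroup Y] [InnerProductSpace ℝ Y]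

theorem apply_eq_self_of_mem_orthogonal_ker {A : X →L[ℝ] Y} {G : X →L[ℝ] X}
    (hG : IsSelfAdjoint G) (hGG : G ∘L G = G) (hAG : A ∘L G = A) {v : X} (hv : v ∈ A.kerᗮ) :
    G v = v := by
  set y := v - G v
  have hAy : y ∈ A.ker := by
    simp [y, ← comp_apply, hAG]
  have hGy : G y = 0 := by
    simp [y, ← comp_apply, hGG]
  have hyy : ⟪y, y⟫ = 0 :=
    calc ⟪y, y⟫ = ⟪y, v⟫ - ⟪G y, v⟫ := by
          rw [inner_sub_right]; congr 1; exact (hG.isSymmetric y v).symm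
      _ = 0 := by
          rw [Submodule.inner_right_of_mem_orthogonal hAy hv, hGy, inner_zero_left, sub_zero]
  exact (sub_eq_zero.mp (inner_self_eq_zero.mp hyy)).symm

namespace IsMoorePenroseInverse

variable [CompleteSpace Y] {A : X →L[ℝ] Y} {B : Y →L[ℝ] X}

theorem apply_apply_of_mem_orthogonal_ker (hB : IsMoorePenroseInverse A B) {v : X}
    (hv : v ∈ A.kerᗮ) : B (A v) = v := by
  obtain ⟨hABA, hBAB, -, hBA⟩ := hB
  refine apply_eq_self_of_mem_orthogonal_ker hBA ?_ hABA hv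
  simpa only [comp_assoc] using congrArg (· ∘L A) hBAB

theorem apply_apply_of_mem_orthogonal_ker_adjoint (hB : IsMoorePenroseInverse A B) {w : Y}
    (hw : w ∈ (adjoint A).kerᗮ) : A (B w) = w := by
  obtain ⟨hABA, -, hAB, -⟩ := hB
  refine apply_eq_self_of_mem_orthogonal_ker hAB ?_ ?_ hw
  · simpa only [comp_assoc] using congrArg (· ∘L B) hABA
  · rw [← hAB.adjoint_eq, ← adjoint_comp, comp_assoc, hABA]

end IsMoorePenroseInverse

end MoorePenrose

theorem IsSelfAdjoint.mul_eq_self_of_mul_eq_self {R : Type*} [Monoid R] [StarMul R] {g p : R}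
    (hg : IsSelfAdjoint g) (hp : IsSelfAdjoint p) (h : g * p = p) : p * g = p := by
  simpa [hg.star_eq, hp.star_eq] using congrArg star h

namespace Submodule

variable {X : Type*} [NormedAddCommGroup X] [InnerProductSpace ℝ X]
  {U V : Submodule ℝ X} [U.HasOrthogonalProjection] [V.HasOrthogonalProjection]

theorem inner_starProjection_apply_self (x : X) :
    ⟪U.starProjection x, x⟫ = ‖U.starProjection x‖ ^ 2 :=
  calc ⟪U.starProjection x, x⟫ = ⟪U.starProjection (U.starProjection x), x⟫ := by
        rw [starProjection_eq_self_iff.mpr (U.starProjection_apply_mem x)]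
    _ = ‖U.starProjection x‖ ^ 2 := by
        rw [inner_starProjection_left_eq_right, real_inner_self_eq_norm_sq]

theorem ker_starProjection_add_starProjection :
    (U.starProjection + V.starProjection).ker = (U ⊔ V)ᗮ := by
  rw [← inf_orthogonal]
  ext x
  rw [LinearMap.mem_ker, mem_inf, ← starProjection_apply_eq_zero_iff,
    ← starProjection_apply_eq_zero_iff]
  constructor
  · intro hx
    have hsum : ‖U.starProjection x‖ ^ 2 + ‖V.starProjection x‖ ^ 2 = 0 := by
      rw [← inner_starProjection_apply_self, ← inner_starProjection_apply_self, ← inner_add_left]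
      exact (congrArg (⟪·, x⟫) hx).trans (inner_zero_left x)
    rw [add_eq_zero_iff_of_nonneg (by positivity) (by positivity)] at hsum
    simpa using hsum
  · rintro ⟨hU, hV⟩
    simp [hU, hV]

theorem le_orthogonal_ker_starProjection_add_starProjection :
    U ⊔ V ≤ (U.starProjection + V.starProjection).kerᗮ := by
  rw [ker_starProjection_add_starProjection]
  exact le_orthogonal_orthogonal _

variable [CompleteSpace X] {B : X →L[ℝ] X}
  (hB : IsMoorePenroseInverse (U.starProjection + V.starProjection) B)
include hB

theorem add_starProjection_mul_mul_starProjection_of_le {W : Submodule ℝ X}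
    [W.HasOrthogonalProjection] (hW : W ≤ U ⊔ V) :
    (U.starProjection + V.starProjection) * B * W.starProjection = W.starProjection := by
  have hT := (isSelfAdjoint_starProjection U).add (isSelfAdjoint_starProjection V)
  ext x
  refine hB.apply_apply_of_mem_orthogonal_ker_adjoint ?_
  rw [hT.adjoint_eq]
  exact le_orthogonal_ker_starProjection_add_starProjection (hW (W.starProjection_apply_mem x))

theorem starProjection_mul_mul_add_starProjection_of_le {W : Submodule ℝ X}
    [W.HasOrthogonalProjection] (hW : W ≤ U ⊔ V) :
    W.starProjection * (B * (U.starProjection + V.starProjection)) = W.starProjection := by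
  refine hB.2.2.2.mul_eq_self_of_mul_eq_self (isSelfAdjoint_starProjection W) ?_
  ext x
  exact hB.apply_apply_of_mem_orthogonal_ker
    (le_orthogonal_ker_starProjection_add_starProjection (hW (W.starProjection_apply_mem x)))

theorem starProjection_mul_mul_starProjection_comm :
    U.starProjection * B * V.starProjection = V.starProjection * B * U.starProjection := by
  have hTBQ := add_starProjection_mul_mul_starProjection_of_le hB (le_sup_right (a := U))
  have hQBT := starProjection_mul_mul_add_starProjection_of_le hB (le_sup_right (a := U))
  rw [add_mul, add_mul] at hTBQ
  rw [mul_add, mul_add, ← mul_assoc, ← mul_assoc] at hQBT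
  exact add_right_cancel (hTBQ.trans hQBT.symm)

theorem two_smul_starProjection_inf_mul [(U ⊓ V).HasOrthogonalProjection] :
    (2 : ℝ) • ((U ⊓ V).starProjection * B) = (U ⊓ V).starProjection := by
  have hWT : (U ⊓ V).starProjection * (U.starProjection + V.starProjection) =
      (2 : ℝ) • (U ⊓ V).starProjection := by
    rw [mul_add, ContinuousLinearMap.mul_def, ContinuousLinearMap.mul_def,
      starProjection_comp_starProjection_of_le inf_le_left,
      starProjection_comp_starProjection_of_le inf_le_right, two_smul]
  have hWTB : (U ⊓ V).starProjection * ((U.starProjection + V.starProjection) * B) =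
      (U ⊓ V).starProjection :=
    hB.2.2.1.mul_eq_self_of_mul_eq_self (isSelfAdjoint_starProjection _)
      (add_starProjection_mul_mul_starProjection_of_le hB inf_le_sup)
  conv_rhs => rw [← hWTB, ← mul_assoc, hWT, smul_mul_assoc]

theorem starProjection_inf_eq_two_smul [(U ⊓ V).HasOrthogonalProjection] :
    (U ⊓ V).starProjection = (2 : ℝ) • (U.starProjection * B * V.starProjection) := by
  have hM : ∀ x, ((2 : ℝ) • (U.starProjection * B * V.starProjection)) x ∈ U ⊓ V := by
    intro x
    refine ⟨U.smul_mem _ (U.starProjection_apply_mem _), ?_⟩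
    rw [starProjection_mul_mul_starProjection_comm hB]
    exact V.smul_mem _ (V.starProjection_apply_mem _)
  calc (U ⊓ V).starProjection = (U ⊓ V).starProjection * V.starProjection :=
        (starProjection_comp_starProjection_of_le inf_le_right).symm
    _ = (2 : ℝ) • ((U ⊓ V).starProjection * B) * V.starProjection := by
        rw [two_smul_starProjection_inf_mul hB]
    _ = (2 : ℝ) • ((U ⊓ V).starProjection * U.starProjection * B * V.starProjection) := by
        rw [ContinuousLinearMap.mul_def (U ⊓ V).starProjection U.starProjection,
          starProjection_comp_starProjection_of_le inf_le_left, smul_mul_assoc]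
    _ = (U ⊓ V).starProjection * ((2 : ℝ) • (U.starProjection * B * V.starProjection)) := by
        simp only [mul_smul_comm, mul_assoc]
    _ = (2 : ℝ) • (U.starProjection * B * V.starProjection) :=
        ContinuousLinearMap.ext fun x ↦ starProjection_eq_self_iff.mpr (hM x)

end Submodule

/-- Anderson–Duffin: for linear subspaces `U, V` of a finite-dimensional real
Hilbert space, `P_{U ∩ V} = 2 P_U (P_U + P_V)^† P_V`. -/
theorem stmt2 {X : Type*} [NormedAddCommGroup X] [InnerProductSpace ℝ X]
    [FiniteDimensional ℝ X] (U V : Submodule ℝ X) (B : X →L[ℝ] X)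
    (hB : IsMoorePenroseInverse (proj U + proj V) B) :
    proj (U ⊓ V) = (2 : ℝ) • (proj U ∘L B ∘L proj V) :=
  Submodule.starProjection_inf_eq_two_smul hB
end

section
/- Let U, V be linear subspaces of a finite-dimensional real Hilbert space X. Then P_{U+V} = Id − 2(Id − P_U)(2·Id − P_U − P_V)^†(Id − P_V). -/
namespace Submodule

variable {𝕜 E : Type*} [RCLike 𝕜] [NormedAddCommGroup E] [InnerProductSpace 𝕜 E]

theorem starProjection_apply_eq_zero_of_add_eq_zero {K L : Submodule 𝕜 E}
    [K.HasOrthogonalProjection] [L.HasOrthogonalProjection] {y : E}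
    (hy : K.starProjection y + L.starProjection y = 0) : K.starProjection y = 0 := by
  have hsum : RCLike.re (inner 𝕜 (K.starProjection y) y) +
      RCLike.re (inner 𝕜 (L.starProjection y) y) = 0 := by
    rw [← map_add, ← inner_add_left, hy, inner_zero_left, map_zero]
  have hK : ‖K.orthogonalProjectionOnto y‖ ^ 2 = 0 := by
    rw [← re_inner_starProjection_eq_normSq]
    linarith [re_inner_starProjection_nonneg K y, re_inner_starProjection_nonneg L y]
  rw [starProjection_apply, coe_eq_zero, ← norm_eq_zero]
  exact pow_eq_zero_iff two_ne_zero |>.mp hK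

theorem starProjection_comp_comp_add_eq_of_comp_comp_eq_self {K L : Submodule 𝕜 E}
    [K.HasOrthogonalProjection] [L.HasOrthogonalProjection] {B : E →L[𝕜] E}
    (hB : (K.starProjection + L.starProjection) ∘L B ∘L (K.starProjection + L.starProjection) =
      K.starProjection + L.starProjection) :
    K.starProjection ∘L B ∘L (K.starProjection + L.starProjection) = K.starProjection := by
  ext x
  set A := K.starProjection + L.starProjection
  have hAx : A (x - B (A x)) = 0 := by
    rw [map_sub, sub_eq_zero]
    exact (congr($hB x)).symm
  have hKx : K.starProjection (x - B (A x)) = 0 := starProjection_apply_eq_zero_of_add_eq_zero hAx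
  rw [map_sub, sub_eq_zero] at hKx
  exact hKx.symm

theorem two_smul_starProjection_orthogonal_comp_comp_eq {U V : Submodule 𝕜 E}
    [U.HasOrthogonalProjection] [V.HasOrthogonalProjection] [(U ⊔ V).HasOrthogonalProjection]
    {B : E →L[𝕜] E}
    (hB : (Uᗮ.starProjection + Vᗮ.starProjection) ∘L B ∘L
        (Uᗮ.starProjection + Vᗮ.starProjection) = Uᗮ.starProjection + Vᗮ.starProjection) :
    (2 : 𝕜) • (Uᗮ.starProjection ∘L B ∘L Vᗮ.starProjection) = (U ⊔ V)ᗮ.starProjection := by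
  set T := Uᗮ.starProjection ∘L B ∘L Vᗮ.starProjection
  have hUV : U ⊔ V ≤ LinearMap.ker (T : E →ₗ[𝕜] E) := by
    refine sup_le (fun u hu => ?_) (fun v hv => ?_)
    · have hPu : Uᗮ.starProjection u = 0 :=
        (starProjection_apply_eq_zero_iff Uᗮ).mpr (le_orthogonal_orthogonal U hu)
      simpa [T, hPu] using congr($(starProjection_comp_comp_add_eq_of_comp_comp_eq_self hB) u)
    · have hQv : Vᗮ.starProjection v = 0 :=
        (starProjection_apply_eq_zero_iff Vᗮ).mpr (le_orthogonal_orthogonal V hv)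
      simp [T, hQv]
  have hW : ∀ w ∈ (U ⊔ V)ᗮ, (2 : 𝕜) • T w = w := by
    intro w hw
    rw [← inf_orthogonal] at hw
    have hPw : Uᗮ.starProjection w = w := starProjection_eq_self_iff.mpr hw.1
    have hQw : Vᗮ.starProjection w = w := starProjection_eq_self_iff.mpr hw.2
    have h := congr($(starProjection_comp_comp_add_eq_of_comp_comp_eq_self hB) w)
    simp only [ContinuousLinearMap.comp_apply, add_apply, hPw, hQw] at h
    simpa only [T, ContinuousLinearMap.comp_apply, hQw, ← two_smul 𝕜, map_smul] using h
  ext x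
  calc ((2 : 𝕜) • T) x
      = (2 : 𝕜) • T ((U ⊔ V).starProjection x + (U ⊔ V)ᗮ.starProjection x) := by
        rw [starProjection_add_starProjection_orthogonal, smul_apply]
    _ = (U ⊔ V)ᗮ.starProjection x := by
        rw [map_add, show T _ = 0 from hUV ((U ⊔ V).starProjection_apply_mem x), zero_add,
          hW _ ((U ⊔ V)ᗮ.starProjection_apply_mem x)]

end Submodule

theorem proj_eq_starProjection {X : Type*} [NormedAddCommGroup X] [InnerProductSpace ℝ X]
    (U : Submodule ℝ X) [U.HasOrthogonalProjection] : proj U = U.starProjection := rfl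

/-- for linear subspaces `U, V` of a finite-dimensional real Hilbert space,
`P_{U+V} = Id − 2(Id − P_U)(2·Id − P_U − P_V)^†(Id − P_V)`. -/
theorem stmt3 {X : Type*} [NormedAddCommGroup X] [InnerProductSpace ℝ X]
    [FiniteDimensional ℝ X] (U V : Submodule ℝ X) (B : X →L[ℝ] X)
    (hB : IsMoorePenroseInverse
      ((2 : ℝ) • ContinuousLinearMap.id ℝ X - proj U - proj V) B) :
    proj (U ⊔ V) = ContinuousLinearMap.id ℝ X -
      (2 : ℝ) • ((ContinuousLinearMap.id ℝ X - proj U) ∘L B ∘L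
        (ContinuousLinearMap.id ℝ X - proj V)) := by
  have hA : (2 : ℝ) • ContinuousLinearMap.id ℝ X - proj U - proj V =
      Uᗮ.starProjection + Vᗮ.starProjection := by
    simp only [proj_eq_starProjection, Submodule.starProjection_orthogonal]
    module
  rw [hA] at hB
  simp only [proj_eq_starProjection, ← Submodule.starProjection_orthogonal,
    Submodule.two_smul_starProjection_orthogonal_comp_comp_eq hB.1,
    Submodule.orthogonal_orthogonal]
end

section
/- Let L : X → X be a linear nonexpansive operator on a real Hilbert space X and x ∈ X. Then the iterates L^k x converge strongly to P_{Fix L}(x) if and only if L^k x − L^{k+1} x → 0 strongly. -/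
open Filter

variable {X : Type*} [NormedAddCommGroup X] [InnerProductSpace ℝ X] [CompleteSpace X]

/-- The fixed-point set `Fix L = {x : L x = x}` of a continuous linear operator,
as a (closed) subspace. -/
noncomputable def fixSpace (L : X →L[ℝ] X) : Submodule ℝ X :=
  LinearMap.ker ((ContinuousLinearMap.id ℝ X - L : X →L[ℝ] X) : X →ₗ[ℝ] X)

instance (L : X →L[ℝ] X) : CompleteSpace (fixSpace L) :=
  (ContinuousLinearMap.isClosed_ker (ContinuousLinearMap.id ℝ X - L)).completeSpace_coe

/-!
Write `aₖ = Lᵏ x` and `c = ⨅ₖ ‖aₖ‖`, the limit of the decreasing sequence `‖aₖ‖`.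
If `aₖ - aₖ₊₁ → 0`, then `aₖ₊ₙ - aₖ₊ₘ → 0` as `k → ∞`, and nonexpansiveness gives
`‖aₙ + aₘ‖ ≥ ‖aₖ₊ₙ + aₖ₊ₘ‖ ≥ 2c - ‖aₖ₊ₙ - aₖ₊ₘ‖`, hence `‖aₙ + aₘ‖ ≥ 2c`. The parallelogram law
then gives `‖aₙ - aₘ‖² ≤ 2‖aₙ‖² + 2‖aₘ‖² - 4c² → 0`, so `(aₖ)` converges. Its limit is
`P_{Fix L} x` by von Neumann's mean ergodic theorem, since Cesàro means of a convergent sequence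
have the same limit.
-/

open Topology Finset

theorem tendsto_sub_add_of_tendsto_sub_succ {G : Type*} [AddCommGroup G] [TopologicalSpace G]
    [IsTopologicalAddGroup G] {a : ℕ → G} (h : Tendsto (fun k => a k - a (k + 1)) atTop (𝓝 0))
    (j : ℕ) : Tendsto (fun k => a k - a (k + j)) atTop (𝓝 0) := by
  have htel : ∀ k, a k - a (k + j) = ∑ i ∈ range j, (a (k + i) - a (k + i + 1)) := fun k =>
    (sum_range_sub' (fun i => a (k + i)) j).symm
  simp_rw [htel]
  simpa using tendsto_finsetSum (range j) fun i _ => h.comp (tendsto_add_atTop_nat i)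

section Nonexpansive

variable {E : Type*} [NormedAddCommGroup E] [NormedSpace ℝ E] {L : E →L[ℝ] E}

theorem pow_add_apply (L : E →L[ℝ] E) (k n : ℕ) (y : E) :
    (L ^ (k + n)) y = (L ^ k) ((L ^ n) y) := by
  rw [pow_add, mul_apply_eq_comp]

theorem norm_pow_apply_le (hL : ∀ y, ‖L y‖ ≤ ‖y‖) (k : ℕ) (y : E) : ‖(L ^ k) y‖ ≤ ‖y‖ := by
  induction k with
  | zero => simp
  | succ k ih =>
    rw [pow_succ', mul_apply_eq_comp]
    exact (hL _).trans ih

theorem antitone_norm_pow_apply (hL : ∀ y, ‖L y‖ ≤ ‖y‖) (x : E) :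
    Antitone fun k => ‖(L ^ k) x‖ :=
  antitone_nat_of_succ_le fun k => by
    rw [pow_succ', mul_apply_eq_comp]
    exact hL _

theorem two_mul_iInf_norm_pow_apply_le (hL : ∀ y, ‖L y‖ ≤ ‖y‖) {x : E}
    (h : Tendsto (fun k => (L ^ k) x - (L ^ (k + 1)) x) atTop (𝓝 0)) (n m : ℕ) :
    2 * ⨅ k, ‖(L ^ k) x‖ ≤ ‖(L ^ n) x + (L ^ m) x‖ := by
  set a : ℕ → E := fun k => (L ^ k) x
  have hgap : Tendsto (fun k => ‖a (k + n) - a (k + m)‖) atTop (𝓝 0) := by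
    simpa only [sub_sub_sub_cancel_left, sub_zero, norm_zero] using
      ((tendsto_sub_add_of_tendsto_sub_succ h m).sub (tendsto_sub_add_of_tendsto_sub_succ h n)).norm
  have hbdd : BddBelow (Set.range fun k => ‖a k‖) := ⟨0, by rintro _ ⟨k, rfl⟩; positivity⟩
  have hle : ∀ k, 2 * ⨅ k, ‖a k‖ ≤ ‖a n + a m‖ + ‖a (k + n) - a (k + m)‖ := fun k =>
    calc 2 * ⨅ k, ‖a k‖ ≤ 2 * ‖a (k + m)‖ := by gcongr; exact ciInf_le hbdd _
      _ = ‖(a (k + n) + a (k + m)) - (a (k + n) - a (k + m))‖ := by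
        rw [add_sub_sub_cancel, ← two_smul ℝ, norm_smul, Real.norm_two]
      _ ≤ ‖a (k + n) + a (k + m)‖ + ‖a (k + n) - a (k + m)‖ := norm_sub_le _ _
      _ ≤ ‖a n + a m‖ + ‖a (k + n) - a (k + m)‖ := by
        gcongr
        simp only [a, pow_add_apply, ← map_add]
        exact norm_pow_apply_le hL k _
  exact ge_of_tendsto' (by simpa only [add_zero] using tendsto_const_nhds.add hgap) hle

end Nonexpansive

section InnerProduct

variable {E : Type*} [NormedAddCommGroup E] [InnerProductSpace ℝ E]

theorem cauchySeq_of_tendsto_norm_of_le_norm_add {a : ℕ → E} {c : ℝ}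
    (hc : Tendsto (‖a ·‖) atTop (𝓝 c)) (hadd : ∀ n m, 2 * c ≤ ‖a n + a m‖) : CauchySeq a := by
  have hc0 : 0 ≤ c := ge_of_tendsto' hc fun k => norm_nonneg _
  set bound : ℕ × ℕ → ℝ := fun p => √(2 * ‖a p.1‖ ^ 2 + 2 * ‖a p.2‖ ^ 2 - 4 * c ^ 2)
  have hdist : ∀ p, dist (a p.1) (a p.2) ≤ bound p := fun ⟨n, m⟩ => by
    have hpar := parallelogram_law_with_norm ℝ (a n) (a m)
    have h2c := hadd n m
    refine Real.le_sqrt_of_sq_le ?_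
    rw [dist_eq_norm]
    nlinarith
  have hbound : Tendsto bound atTop (𝓝 0) := by
    rw [← prod_atTop_atTop_eq]
    have h := ((((hc.comp tendsto_fst).pow 2).const_mul 2).add
      (((hc.comp tendsto_snd).pow 2).const_mul 2)).sub_const (4 * c ^ 2) |>.sqrt
    rwa [show 2 * c ^ 2 + 2 * c ^ 2 - 4 * c ^ 2 = 0 by ring, Real.sqrt_zero] at h
  exact cauchySeq_iff_tendsto_dist_atTop_0.2 (squeeze_zero (fun _ => dist_nonneg) hdist hbound)

theorem cauchySeq_pow_apply_of_tendsto_sub {L : E →L[ℝ] E} (hL : ∀ y, ‖L y‖ ≤ ‖y‖) {x : E}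
    (h : Tendsto (fun k => (L ^ k) x - (L ^ (k + 1)) x) atTop (𝓝 0)) :
    CauchySeq fun k => (L ^ k) x :=
  cauchySeq_of_tendsto_norm_of_le_norm_add
    (tendsto_atTop_ciInf (antitone_norm_pow_apply hL x) ⟨0, by rintro _ ⟨k, rfl⟩; positivity⟩)
    (two_mul_iInf_norm_pow_apply_le hL h)

theorem fixSpace_eq_eqLocus (L : E →L[ℝ] E) :
    fixSpace L = (L : E →ₗ[ℝ] E).eqLocus ((1 : E →L[ℝ] E) : E →ₗ[ℝ] E) := by
  ext y
  simp only [fixSpace, LinearMap.mem_ker, LinearMap.mem_eqLocus, ContinuousLinearMap.coe_coe,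
    sub_apply, ContinuousLinearMap.id_apply, one_apply_eq_self]
  rw [sub_eq_zero, eq_comm]

theorem eq_orthogonalProjection_fixSpace_of_tendsto_pow_apply [CompleteSpace E] {L : E →L[ℝ] E}
    (hL : ‖L‖ ≤ 1) {x p : E} (hp : Tendsto (fun k => (L ^ k) x) atTop (𝓝 p)) :
    p = Submodule.orthogonalProjectionOnto (fixSpace L) x := by
  have hmean := L.tendsto_birkhoffAverage_orthogonalProjection hL x
  refine tendsto_nhds_unique ?_ (by
    convert hmean using 2
    simp only [← Submodule.starProjection_apply]
    congr!
    exact fixSpace_eq_eqLocus L)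
  simp only [FunLike.coe_pow_eq_iterate] at hp
  exact hp.cesaro_smul

end InnerProduct

/-- if `L : X → X` is linear nonexpansive on a real Hilbert space and `x ∈ X`, then
`L^k x → P_{Fix L} x` strongly iff `L^k x − L^{k+1} x → 0` strongly. -/
theorem stmt5 (L : X →L[ℝ] X) (hL : ∀ x, ‖L x‖ ≤ ‖x‖) (x : X) :
    Tendsto (fun k : ℕ => (L ^ k) x) atTop
        (nhds (Submodule.orthogonalProjectionOnto (fixSpace L) x : X)) ↔
      Tendsto (fun k : ℕ => (L ^ k) x - (L ^ (k + 1)) x) atTop (nhds 0) := by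
  refine ⟨fun hconv => by simpa using hconv.sub (hconv.comp (tendsto_add_atTop_nat 1)), fun h => ?_⟩
  obtain ⟨p, hp⟩ := cauchySeq_tendsto_of_complete (cauchySeq_pow_apply_of_tendsto_sub hL h)
  have hLnorm : ‖L‖ ≤ 1 := L.opNorm_le_bound zero_le_one fun y => by simpa using hL y
  rwa [← eq_orthogonalProjection_fixSpace_of_tendsto_pow_apply hLnorm hp]
end

section
/- Let L : X → X be a linear averaged nonexpansive operator on a real Hilbert space X. Then for every x ∈ X, the iterates L^k x converge strongly to P_{Fix L}(x). -/
/-!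
With `L = (1 - α) Id + α N`, the identity
`‖(1 - α) z + α w‖² = (1 - α) ‖z‖² + α ‖w‖² - α (1 - α) ‖z - w‖²` gives
`‖L z‖² + c ‖z - L z‖² ≤ ‖z‖²` with `c = (1 - α) / α > 0`. Hence `L` is nonexpansive and,
telescoping along an orbit, `∑ₖ ‖Lᵏ z - Lᵏ⁺¹ z‖² ≤ ‖z‖² / c`, so `Lᵏ → 0` pointwise on the range
of `Id - L`. The `Lᵏ` being uniformly `1`-Lipschitz, this persists on the closure of that range,
which contains `(Fix L)ᗮ`: a vector `u` orthogonal to the range has `⟪L u, u⟫ = ‖u‖²` and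
`‖L u‖ ≤ ‖u‖`, hence `L u = u`. Finally `x = P x + (x - P x)` with `Lᵏ (P x) = P x`.
-/

open Filter

variable {X : Type*} [NormedAddCommGroup X] [InnerProductSpace ℝ X] [CompleteSpace X]

open Finset
open scoped Topology

section Normed

variable {E : Type*} [NormedAddCommGroup E]

theorem tendsto_iterate_sub_iterate_succ_of_norm_sq_add_le {f : E → E} {c : ℝ} (hc : 0 < c)
    (hf : ∀ z, ‖f z‖ ^ 2 + c * ‖z - f z‖ ^ 2 ≤ ‖z‖ ^ 2) (z : E) :
    Tendsto (fun k => f^[k] z - f^[k + 1] z) atTop (𝓝 0) := by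
  set d : ℕ → ℝ := fun k => ‖f^[k] z - f^[k + 1] z‖ ^ 2
  have hstep : ∀ k, c * d k ≤ ‖f^[k] z‖ ^ 2 - ‖f^[k + 1] z‖ ^ 2 := fun k => by
    have := hf (f^[k] z)
    rw [← Function.iterate_succ_apply' f k z] at this
    linarith
  have hsum : ∀ n, ∑ k ∈ range n, d k ≤ ‖z‖ ^ 2 / c := fun n => by
    rw [le_div_iff₀' hc, mul_sum]
    calc ∑ k ∈ range n, c * d k
        ≤ ∑ k ∈ range n, (‖f^[k] z‖ ^ 2 - ‖f^[k + 1] z‖ ^ 2) := sum_le_sum fun k _ => hstep k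
      _ = ‖z‖ ^ 2 - ‖f^[n] z‖ ^ 2 := by rw [sum_range_sub']; rfl
      _ ≤ ‖z‖ ^ 2 := sub_le_self _ (sq_nonneg _)
  have hd : Tendsto d atTop (𝓝 0) :=
    (summable_of_sum_range_le (fun k => sq_nonneg _) hsum).tendsto_atTop_zero
  rw [tendsto_zero_iff_norm_tendsto_zero]
  simpa [d, Real.sqrt_sq (norm_nonneg _)] using hd.sqrt

variable [NormedSpace ℝ E]

theorem ContinuousLinearMap.opNorm_le_one_of_norm_sq_add_le {L : E →L[ℝ] E} {c : ℝ} (hc : 0 ≤ c)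
    (hL : ∀ z, ‖L z‖ ^ 2 + c * ‖z - L z‖ ^ 2 ≤ ‖z‖ ^ 2) : ‖L‖ ≤ 1 :=
  L.opNorm_le_bound zero_le_one fun z => by
    rw [one_mul, ← pow_le_pow_iff_left₀ (norm_nonneg _) (norm_nonneg _) two_ne_zero]
    nlinarith [hL z, mul_nonneg hc (sq_nonneg ‖z - L z‖)]

end Normed

section Inner

variable {E : Type*} [NormedAddCommGroup E] [InnerProductSpace ℝ E]

theorem norm_one_sub_smul_add_smul_sq (a : ℝ) (x y : E) :
    ‖(1 - a) • x + a • y‖ ^ 2 = (1 - a) * ‖x‖ ^ 2 + a * ‖y‖ ^ 2 - a * (1 - a) * ‖x - y‖ ^ 2 := by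
  rw [norm_add_sq_real, norm_sub_sq_real, norm_smul, norm_smul, real_inner_smul_left,
    real_inner_smul_right, mul_pow, mul_pow, Real.norm_eq_abs, Real.norm_eq_abs, sq_abs, sq_abs]
  ring

theorem averaged_norm_sq_add_le {L N : E →L[ℝ] E} {α : ℝ} (hα0 : 0 < α) (hN : ∀ x, ‖N x‖ ≤ ‖x‖)
    (hL : L = (1 - α) • ContinuousLinearMap.id ℝ E + α • N) (z : E) :
    ‖L z‖ ^ 2 + (1 - α) / α * ‖z - L z‖ ^ 2 ≤ ‖z‖ ^ 2 := by
  have hLz : L z = (1 - α) • z + α • N z := by simp [hL]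
  have hsub : z - L z = α • (z - N z) := by rw [hLz]; module
  have hNz : ‖N z‖ ^ 2 ≤ ‖z‖ ^ 2 := by gcongr; exact hN z
  rw [hsub, norm_smul, mul_pow, Real.norm_eq_abs, sq_abs, hLz, norm_one_sub_smul_add_smul_sq]
  field_simp
  nlinarith

theorem mem_fixSpace_iff (L : E →L[ℝ] E) (x : E) : x ∈ fixSpace L ↔ L x = x :=
  sub_eq_zero.trans eq_comm

variable [CompleteSpace E]

theorem orthogonal_fixSpace_subset_closure_range (L : E →L[ℝ] E) (hL : ‖L‖ ≤ 1) :
    ((fixSpace L)ᗮ : Set E) ⊆ closure (Set.range fun z => z - L z) := by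
  have hrange : (Set.range fun z => z - L z) =
      (LinearMap.range ((ContinuousLinearMap.id ℝ E - L : E →L[ℝ] E) : E →ₗ[ℝ] E) : Set E) := by
    ext
    simp
  rw [hrange, ← Submodule.topologicalClosure_coe, SetLike.coe_subset_coe,
    ← Submodule.orthogonal_orthogonal_eq_closure]
  refine Submodule.orthogonal_le fun u hu => (mem_fixSpace_iff L u).2 ?_
  refine eq_of_norm_le_re_inner_eq_norm_sq (𝕜 := ℝ)
    ((L.le_of_opNorm_le hL u).trans_eq (one_mul _)) ?_
  have horth : inner ℝ (u - L u) u = 0 := (Submodule.mem_orthogonal _ u).1 hu _ ⟨u, by simp⟩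
  rw [inner_sub_left, real_inner_self_eq_norm_sq] at horth
  rw [RCLike.re_to_real]
  linarith

theorem tendsto_pow_apply_orthogonalProjectionOnto_fixSpace (L : E →L[ℝ] E) (hL : ‖L‖ ≤ 1)
    (hreg : ∀ z, Tendsto (fun k => (L ^ k) (z - L z)) atTop (𝓝 0)) (x : E) :
    Tendsto (fun k => (L ^ k) x) atTop (𝓝 ((fixSpace L).orthogonalProjectionOnto x : E)) := by
  set p : E := ((fixSpace L).orthogonalProjectionOnto x : E)
  have hp : ∀ k, (L ^ k) p = p := fun k => by
    rw [FunLike.coe_pow_eq_iterate]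
    exact Function.iterate_fixed ((mem_fixSpace_iff L p).1 (Submodule.coe_mem _)) k
  have hclosed : IsClosed {v | Tendsto (fun k => (L ^ k) v) atTop (𝓝 0)} := by
    simp only [FunLike.coe_pow_eq_iterate]
    exact (LipschitzWith.uniformEquicontinuous _ 1 fun k => by
      simpa using (L.lipschitz.weaken (show ‖L‖₊ ≤ 1 from hL)).iterate k).equicontinuous
      |>.isClosed_setOfPred_tendsto continuous_const
  have hrest : Tendsto (fun k => (L ^ k) (x - p)) atTop (𝓝 0) :=
    closure_minimal (by rintro _ ⟨z, rfl⟩; exact hreg z) hclosed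
      (orthogonal_fixSpace_subset_closure_range L hL (Submodule.sub_starProjection_mem_orthogonal x))
  simpa [map_sub, hp] using (tendsto_const_nhds (x := p)).add hrest

end Inner

/-- if `L = (1−α)Id + αN` is a linear averaged nonexpansive operator on a real
Hilbert space (`0 < α < 1`, `N` linear nonexpansive), then for every `x` the iterates `L^k x`
converge strongly to `P_{Fix L} x`. -/
theorem stmt7 (L N : X →L[ℝ] X) (α : ℝ) (hα0 : 0 < α) (hα1 : α < 1)
    (hN : ∀ x, ‖N x‖ ≤ ‖x‖)
    (hL : L = (1 - α) • ContinuousLinearMap.id ℝ X + α • N) (x : X) :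
    Tendsto (fun k : ℕ => (L ^ k) x) atTop
      (nhds ((fixSpace L).orthogonalProjectionOnto x : X)) := by
  have hc : 0 < (1 - α) / α := div_pos (sub_pos.2 hα1) hα0
  have hav := averaged_norm_sq_add_le hα0 hN hL
  refine tendsto_pow_apply_orthogonalProjectionOnto_fixSpace L
    (L.opNorm_le_one_of_norm_sq_add_le hc.le hav) (fun z => ?_) x
  simpa [FunLike.coe_pow_eq_iterate, Function.iterate_succ_apply] using
    tendsto_iterate_sub_iterate_succ_of_norm_sq_add_le hc hav z
end

section
/- Let L : X → X be linear nonexpansive on a real Hilbert space, b ∈ X, and define T(x) = Lx + b. If Fix T is nonempty, then b ∈ ran(Id − L), and for any a with (Id − L)a = b: (i) Fix T = a + Fix L; (ii) P_{Fix T}(x) = P_{Fix L}(x) + P_{(Fix L)^⊥}(a); (iii) T^k x = L^k(x − a) + a for all k. -/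
/-! If `a - L a = b`, the translation `z ↦ z + a` conjugates `L` to the affine map
`T x = L x + b`, so `Fix T = a + Fix L` and `T^k x = L^k (x - a) + a`; such an `a` exists as
soon as `T` has a fixed point. The nearest point of `a + K` to `x` is
`a + P_K (x - a) = P_K x + P_{K^⊥} a`. -/

variable {X : Type*} [NormedAddCommGroup X] [InnerProductSpace ℝ X] [CompleteSpace X]

namespace ContinuousLinearMap

variable {R M : Type*} [Ring R] [TopologicalSpace M] [AddCommGroup M] [IsTopologicalAddGroup M]
  [Module R M] {L : M →L[R] M}

theorem id_sub_apply_eq_iff {x b : M} : (ContinuousLinearMap.id R M - L) x = b ↔ L x + b = x := by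
  rw [sub_apply, id_apply, sub_eq_iff_eq_add', eq_comm]

theorem add_eq_self_iff_sub_mem_ker_id_sub {a b x : M}
    (ha : (ContinuousLinearMap.id R M - L) a = b) :
    L x + b = x ↔
      x - a ∈ LinearMap.ker ((ContinuousLinearMap.id R M - L : M →L[R] M) : M →ₗ[R] M) := by
  rw [LinearMap.mem_ker, coe_coe, map_sub, ha, sub_eq_zero, id_sub_apply_eq_iff]

end ContinuousLinearMap

section Affine

variable {M F : Type*} [AddCommGroup M] [FunLike F M M] [AddMonoidHomClass F M M] {L : F}
  {T : M → M} {a b : M}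

theorem semiconj_add_right_of_eq_map_add (hT : ∀ x, T x = L x + b) (ha : L a + b = a) :
    Function.Semiconj (· + a) L T := fun z => by
  rw [hT, map_add, add_assoc, ha]

theorem iterate_eq_iterate_sub_add (hT : ∀ x, T x = L x + b) (ha : L a + b = a)
    (k : ℕ) (x : M) :
    T^[k] x = L^[k] (x - a) + a := by
  simpa using ((semiconj_add_right_of_eq_map_add hT ha).iterate_right k (x - a)).symm

end Affine

section Projection

variable {𝕜 E : Type*} [RCLike 𝕜] [NormedAddCommGroup E] [InnerProductSpace 𝕜 E]
  (K : Submodule 𝕜 E) [K.HasOrthogonalProjection]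

theorem starProjection_add_starProjection_orthogonal_sub (x a : E) :
    K.starProjection x + Kᗮ.starProjection a - a = K.starProjection (x - a) := by
  rw [Submodule.starProjection_orthogonal_val, map_sub]
  abel

theorem norm_sub_starProjection_add_starProjection_orthogonal_le {x a w : E} (hw : w - a ∈ K) :
    ‖x - (K.starProjection x + Kᗮ.starProjection a)‖ ≤ ‖x - w‖ := by
  have hshift : x - (K.starProjection x + Kᗮ.starProjection a) =
      (x - a) - K.starProjection (x - a) := by
    rw [← starProjection_add_starProjection_orthogonal_sub]
    abel
  calc ‖x - (K.starProjection x + Kᗮ.starProjection a)‖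
      = ⨅ z : K, ‖(x - a) - z‖ := by rw [hshift, Submodule.starProjection_minimal]
    _ ≤ ‖(x - a) - (w - a)‖ :=
      ciInf_le (f := fun z : K => ‖(x - a) - z‖)
        ⟨0, Set.forall_mem_range.2 fun _ => norm_nonneg _⟩ ⟨_, hw⟩
    _ = ‖x - w‖ := by rw [sub_sub_sub_cancel_right]

end Projection

theorem stmt8_general (L : X →L[ℝ] X) (b : X)
    (T : X → X) (hT : ∀ x, T x = L x + b)
    (hfix : {x | T x = x}.Nonempty) :
    b ∈ LinearMap.range ((ContinuousLinearMap.id ℝ X - L : X →L[ℝ] X) : X →ₗ[ℝ] X) ∧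
      ∀ a : X, (ContinuousLinearMap.id ℝ X - L) a = b →
        ({x | T x = x} = (fun z => a + z) '' (fixSpace L : Set X)) ∧
        (∀ x : X,
          (Submodule.orthogonalProjectionOnto (fixSpace L) x : X) +
              (Submodule.orthogonalProjectionOnto (fixSpace L)ᗮ a : X) ∈ {x | T x = x} ∧
            ∀ w ∈ {x | T x = x},
              ‖x - ((Submodule.orthogonalProjectionOnto (fixSpace L) x : X) +
                (Submodule.orthogonalProjectionOnto (fixSpace L)ᗮ a : X))‖ ≤ ‖x - w‖) ∧
        (∀ (k : ℕ) (x : X), T^[k] x = (L ^ k) (x - a) + a) := by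
  obtain ⟨x₀, hx₀⟩ := hfix
  refine ⟨⟨x₀, ContinuousLinearMap.id_sub_apply_eq_iff.2 ((hT x₀).symm.trans hx₀)⟩,
    fun a ha => ?_⟩
  have hFix : ∀ x, T x = x ↔ x - a ∈ fixSpace L := fun x => by
    rw [hT]; exact ContinuousLinearMap.add_eq_self_iff_sub_mem_ker_id_sub ha
  simp only [← Submodule.starProjection_apply]
  refine ⟨?_, fun x => ⟨?_, fun w hw => ?_⟩, fun k x => ?_⟩
  · ext x
    simp only [Set.mem_ofPred_eq, hFix, Set.mem_image, SetLike.mem_coe]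
    refine ⟨fun h => ⟨x - a, h, add_sub_cancel a x⟩, ?_⟩
    rintro ⟨z, hz, rfl⟩
    simpa using hz
  · exact (hFix _).2 (by
      rw [starProjection_add_starProjection_orthogonal_sub]; exact Submodule.coe_mem _)
  · exact norm_sub_starProjection_add_starProjection_orthogonal_le _ ((hFix w).1 hw)
  · rw [FunLike.coe_pow_eq_iterate]
    exact iterate_eq_iterate_sub_add hT (ContinuousLinearMap.id_sub_apply_eq_iff.1 ha) k x

/-- let `L` be linear nonexpansive, `b ∈ X`, and `T x = L x + b` with
`Fix T ≠ ∅`.  Then `b ∈ ran (Id − L)`, and for any `a` with `(Id − L) a = b`: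
(i) `Fix T = a + Fix L`;
(ii) `P_{Fix T} x = P_{Fix L} x + P_{(Fix L)^⊥} a` (expressed by the nearest-point property of
the metric projection onto the set `Fix T`);
(iii) `T^k x = L^k (x − a) + a` for all `k`. -/
theorem stmt8 (L : X →L[ℝ] X) (hL : ∀ x, ‖L x‖ ≤ ‖x‖) (b : X)
    (T : X → X) (hT : ∀ x, T x = L x + b)
    (hfix : {x | T x = x}.Nonempty) :
    b ∈ LinearMap.range ((ContinuousLinearMap.id ℝ X - L : X →L[ℝ] X) : X →ₗ[ℝ] X) ∧
      ∀ a : X, (ContinuousLinearMap.id ℝ X - L) a = b →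
        ({x | T x = x} = (fun z => a + z) '' (fixSpace L : Set X)) ∧
        (∀ x : X,
          (Submodule.orthogonalProjectionOnto (fixSpace L) x : X) +
              (Submodule.orthogonalProjectionOnto (fixSpace L)ᗮ a : X) ∈ {x | T x = x} ∧
            ∀ w ∈ {x | T x = x},
              ‖x - ((Submodule.orthogonalProjectionOnto (fixSpace L) x : X) +
                (Submodule.orthogonalProjectionOnto (fixSpace L)ᗮ a : X))‖ ≤ ‖x - w‖) ∧
        (∀ (k : ℕ) (x : X), T^[k] x = (L ^ k) (x - a) + a) :=
  stmt8_general L b T hT hfix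
end

section
/- With the Malitsky–Tam operator T for closed subspaces U₁,…,Uₙ of X and Z = ∩_i U_i: a point z = (z₁,…,z_{n−1}) ∈ X^{n−1} is a fixed point of T if and only if z₁ ∈ Z + U₁^⊥, z_i ∈ z_{i−1} + U_i^⊥ for 2 ≤ i ≤ n−2, and z_{n−1} ∈ (z_{n−2} + U_{n−1}^⊥) ∩ (P₁z₁ + Uₙ^⊥). -/
open Filter

variable {X : Type*} [NormedAddCommGroup X] [InnerProductSpace ℝ X] [CompleteSpace X]

/-- The orthogonal projection onto a subspace, as a map `X → X`. -/
noncomputable def pr (U : Submodule ℝ X) [U.HasOrthogonalProjection] (x : X) : X :=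
  Submodule.orthogonalProjectionOnto U x

/-- Extension of a tuple in `X^m` to an `ℕ`-indexed family (by zero). -/
noncomputable def extz {m : ℕ} (z : PiLp 2 (fun _ : Fin m => X)) : ℕ → X :=
  fun i => if h : i < m then z ⟨i, h⟩ else 0

/-- The auxiliary sequence `x₁, …, xₙ` of the Malitsky–Tam operator (0-based indexing):
`x 0 = P₀ (z 0)`, `x i = Pᵢ (x (i−1) + z i − z (i−1))` for `1 ≤ i ≤ n − 2`, and
`x (n−1) = P_{n−1} (x 0 + x (n−2) − z (n−2))`. -/
noncomputable def mtX (n : ℕ) (U : ℕ → Submodule ℝ X) [∀ i, (U i).HasOrthogonalProjection]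
    (z : ℕ → X) : ℕ → X
  | 0 => pr (U 0) (z 0)
  | (i + 1) =>
      if i + 1 ≤ n - 2 then pr (U (i + 1)) (mtX n U z i + z (i + 1) - z i)
      else if i + 1 = n - 1 then pr (U (n - 1)) (mtX n U z 0 + mtX n U z i - z i)
      else 0

/-- The Malitsky–Tam operator `T z = z + (x₂ − x₁, …, xₙ − x_{n−1})` on `X^{n−1}`. -/
noncomputable def mtT (n : ℕ) (U : ℕ → Submodule ℝ X) [∀ i, (U i).HasOrthogonalProjection]
    (z : PiLp 2 (fun _ : Fin (n - 1) => X)) : PiLp 2 (fun _ : Fin (n - 1) => X) :=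
  (WithLp.equiv 2 (∀ _ : Fin (n - 1), X)).symm fun j =>
    z j + (mtX n U (extz z) ((j : ℕ) + 1) - mtX n U (extz z) (j : ℕ))

/-- The diagonal embedding `X → X^m`, `x ↦ (x, …, x)`, as a linear map into `ℓ²`-product. -/
noncomputable def diagMap (m : ℕ) (X : Type*) [NormedAddCommGroup X]
    [InnerProductSpace ℝ X] : X →ₗ[ℝ] PiLp 2 (fun _ : Fin m => X) :=
  (WithLp.linearEquiv 2 ℝ (∀ _ : Fin m, X)).symm.toLinearMap ∘ₗ
    LinearMap.pi fun _ => LinearMap.id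

/-- The partial-sum operator `(y₁, …, y_m) ↦ (y₁, y₁ + y₂, …, y₁ + ⋯ + y_m)` on `X^m`. -/
noncomputable def psumL (m : ℕ) (X : Type*) [NormedAddCommGroup X]
    [InnerProductSpace ℝ X] :
    PiLp 2 (fun _ : Fin m => X) →ₗ[ℝ] PiLp 2 (fun _ : Fin m => X) :=
  (WithLp.linearEquiv 2 ℝ (∀ _ : Fin m, X)).symm.toLinearMap ∘ₗ
    (LinearMap.pi fun j : Fin m =>
      ∑ i ∈ Finset.univ.filter (fun i : Fin m => i ≤ j), LinearMap.proj i) ∘ₗ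
    (WithLp.linearEquiv 2 ℝ (∀ _ : Fin m, X)).toLinearMap

/-- The range of the partial-sum operator `Ψ` restricted to `U₁^⊥ × ⋯ × U_m^⊥`. -/
noncomputable def ranPsi (m : ℕ) (U : ℕ → Submodule ℝ X) :
    Submodule ℝ (PiLp 2 (fun _ : Fin m => X)) :=
  Submodule.map (psumL m X)
    (Submodule.comap (WithLp.linearEquiv 2 ℝ (∀ _ : Fin m, X)).toLinearMap
      (Submodule.pi Set.univ fun j : Fin m => (U (j : ℕ))ᗮ))

/-!
`T z = z` iff the auxiliary points `x₁, …, xₙ` all coincide, necessarily with `c = P₁ z₁`.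
Given `x_{i-1} = c`, each recursion step `P_i (c + v) = c` is equivalent to `c ∈ U_i` and
`v ∈ U_iᗮ`, so the fixed-point condition becomes: `c ∈ Z` (equivalently `z₁ ∈ Z + U₁ᗮ`, as
`Z ≤ U₁`), `z_i - z_{i-1} ∈ U_iᗮ`, and `z_{n-1} - c ∈ Uₙᗮ`.
-/

theorem forall_lt_succ_eq_iff_of_step {α : Type*} {f : ℕ → α} {c : α} {P : ℕ → Prop} {m : ℕ}
    (h0 : f 0 = c) (hstep : ∀ i < m, f i = c → (f (i + 1) = c ↔ P i)) :
    (∀ i < m + 1, f i = c) ↔ ∀ i < m, P i := by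
  induction m with
  | zero => simp [h0]
  | succ m ih =>
    rw [Nat.forall_lt_succ_right (p := fun i => f i = c), Nat.forall_lt_succ_right (p := P),
      ← ih fun i hi => hstep i (by omega)]
    exact and_congr_right fun h => hstep m (by omega) (h m (by omega))

theorem forall_lt_succ_eq_apply_zero_iff {α : Type*} {f : ℕ → α} {m : ℕ} :
    (∀ i < m + 1, f i = f 0) ↔ ∀ i < m, f (i + 1) = f i :=
  forall_lt_succ_eq_iff_of_step rfl fun _ _ hi => by rw [hi]

section MalitskyTam

variable {E : Type*} [NormedAddCommGroup E] [InnerProductSpace ℝ E]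

theorem pr_eq_iff {U : Submodule ℝ E} [U.HasOrthogonalProjection] {x c : E} :
    pr U x = c ↔ c ∈ U ∧ x - c ∈ Uᗮ := by
  refine ⟨?_, fun h => U.eq_starProjection_of_mem_orthogonal h.1 h.2⟩
  rintro rfl
  exact ⟨U.starProjection_apply_mem x, U.sub_starProjection_mem_orthogonal x⟩

theorem pr_mem_iff_mem_sup_orthogonal {U Z : Submodule ℝ E} [U.HasOrthogonalProjection]
    (hZ : Z ≤ U) {x : E} : pr U x ∈ Z ↔ x ∈ Z ⊔ Uᗮ := by
  refine ⟨fun h => ?_, fun h => ?_⟩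
  · rw [← add_sub_cancel (pr U x) x]
    exact Submodule.add_mem_sup h (U.sub_starProjection_mem_orthogonal x)
  · obtain ⟨a, ha, b, hb, rfl⟩ := Submodule.mem_sup.mp h
    rwa [(pr_eq_iff.mpr ⟨hZ ha, by rwa [add_sub_cancel_left]⟩ : pr U (a + b) = a)]

variable (U : ℕ → Submodule ℝ E) [∀ i, (U i).HasOrthogonalProjection] (w : ℕ → E)

theorem mtX_succ_eq_iff {n i : ℕ} (hi : i + 1 ≤ n - 2) {c : E} (hc : mtX n U w i = c) :
    mtX n U w (i + 1) = c ↔ c ∈ U (i + 1) ∧ w (i + 1) - w i ∈ (U (i + 1))ᗮ := by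
  rw [mtX, if_pos hi, hc, pr_eq_iff, add_sub_assoc, add_sub_cancel_left]

theorem mtX_last_eq_iff {k : ℕ} {c : E} (h0 : mtX (k + 2) U w 0 = c)
    (hk : mtX (k + 2) U w k = c) :
    mtX (k + 2) U w (k + 1) = c ↔ c ∈ U (k + 1) ∧ w k - c ∈ (U (k + 1))ᗮ := by
  rw [mtX, if_neg (by omega), if_pos (by omega), h0, hk, pr_eq_iff, sub_right_comm,
    add_sub_cancel_right, ← neg_sub (w k) c, Submodule.neg_mem_iff]
  rfl

theorem mtX_eq_pr_iff (k : ℕ) :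
    (∀ i < k + 3, mtX (k + 3) U w i = pr (U 0) (w 0)) ↔
      pr (U 0) (w 0) ∈ (⨅ i : Fin (k + 3), U (i : ℕ)) ∧
        (∀ i, 1 ≤ i → i ≤ k → w i - w (i - 1) ∈ (U i)ᗮ) ∧
        w (k + 1) - w k ∈ (U (k + 1))ᗮ ∧
        w (k + 1) - pr (U 0) (w 0) ∈ (U (k + 2))ᗮ := by
  set c := pr (U 0) (w 0)
  have hmid := forall_lt_succ_eq_iff_of_step (f := mtX (k + 3) U w) (m := k + 1) (mtX.eq_1 ..)
    fun i hi => mtX_succ_eq_iff U w (n := k + 3) (by omega)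
  rw [Nat.forall_lt_succ_right (p := fun i => mtX (k + 3) U w i = c)]
  constructor
  · rintro ⟨hfirst, hlast⟩
    have hP := hmid.mp hfirst
    have hlast' := (mtX_last_eq_iff U w (mtX.eq_1 ..) (hfirst (k + 1) (by omega))).mp hlast
    refine ⟨Submodule.mem_iInf _ |>.mpr fun ⟨i, hi⟩ => ?_, fun i h1 h2 => ?_, (hP k (by omega)).2,
      hlast'.2⟩
    · rcases i with _ | j
      · exact (pr_eq_iff.mp rfl).1
      · rcases Nat.lt_or_ge j (k + 1) with hj | hj
        · exact (hP j hj).1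
        · obtain rfl : j = k + 1 := by omega
          exact hlast'.1
    · obtain ⟨j, rfl⟩ := Nat.exists_eq_add_of_le' h1
      exact (hP j (by omega)).2
  · rintro ⟨hZ, hmid', hk, hl⟩
    have hc : ∀ i < k + 3, c ∈ U i := fun i hi => (Submodule.mem_iInf _).mp hZ ⟨i, hi⟩
    have hfirst := hmid.mpr fun i hi => ⟨hc _ (by omega), ?_⟩
    · exact ⟨hfirst, (mtX_last_eq_iff U w (mtX.eq_1 ..) (hfirst (k + 1) (by omega))).mpr
        ⟨hc _ (by omega), hl⟩⟩
    · rcases Nat.lt_or_ge i k with hi' | hi'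
      · exact hmid' (i + 1) (by omega) hi'
      · obtain rfl : i = k := by omega
        exact hk

theorem mtT_eq_self_iff (n : ℕ) (z : PiLp 2 (fun _ : Fin (n - 1) => E)) :
    mtT n U z = z ↔ ∀ i < n - 1, mtX n U (extz z) (i + 1) = mtX n U (extz z) i := by
  simp only [mtT, WithLp.equiv_symm_apply, PiLp.ext_iff, add_eq_left, sub_eq_zero, Fin.forall_iff]

end MalitskyTam

/-- `z = (z₀, …, z_{n−2})` is a fixed point of the Malitsky–Tam operator iff
`z₀ ∈ Z + U₀^⊥`, `zᵢ ∈ z_{i−1} + Uᵢ^⊥` for `1 ≤ i ≤ n − 3`, and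
`z_{n−2} ∈ (z_{n−3} + U_{n−2}^⊥) ∩ (P₀ z₀ + U_{n−1}^⊥)` (all indices 0-based; in the paper's
1-based notation these are exactly `z₁ ∈ Z + U₁^⊥`, `zᵢ ∈ z_{i−1} + Uᵢ^⊥` for `2 ≤ i ≤ n−2`,
and `z_{n−1} ∈ (z_{n−2} + U_{n−1}^⊥) ∩ (P₁z₁ + Uₙ^⊥)`). -/
theorem stmt15 (n : ℕ) (hn : 3 ≤ n) (U : ℕ → Submodule ℝ X) [∀ i, CompleteSpace (U i)]
    (z : PiLp 2 (fun _ : Fin (n - 1) => X)) :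
    mtT n U z = z ↔
      (extz z 0 ∈ (⨅ i : Fin n, U (i : ℕ)) ⊔ (U 0)ᗮ ∧
        (∀ i, 1 ≤ i → i ≤ n - 3 → extz z i - extz z (i - 1) ∈ (U i)ᗮ) ∧
        extz z (n - 2) - extz z (n - 3) ∈ (U (n - 2))ᗮ ∧
        extz z (n - 2) - pr (U 0) (extz z 0) ∈ (U (n - 1))ᗮ) := by
  obtain ⟨k, rfl⟩ : ∃ k, n = k + 3 := ⟨n - 3, by omega⟩
  calc mtT (k + 3) U z = z
      ↔ ∀ i < k + 3, mtX (k + 3) U (extz z) i = mtX (k + 3) U (extz z) 0 :=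
        (mtT_eq_self_iff U _ z).trans forall_lt_succ_eq_apply_zero_iff.symm
    _ ↔ _ := by
        rw [mtX.eq_1, mtX_eq_pr_iff]
        exact and_congr_left' (pr_mem_iff_mem_sup_orthogonal (iInf_le _ 0))
end
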